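/- arXiv:2305.08055 — 6 statements merged into one kernel-verified Lean document; each statement's English description precedes it below -/
import Mathlib

section
/- Let S1 and S2 be finite nonempty planar point sets with every point of S1 strictly left of every point of S2. Then the upper common tangent of the upper hulls of S1 and S2 exists and is unique: there is exactly one pair (t1, t2) with t1 ∈ S1, t2 ∈ S2 such that every point of S1 ∪ S2 lies on or below the line through t1 and t2. -/
open Finset

/-- Signed cross product (orientation) of points `a`, `b`, `c`: positive iff `c` is
strictly above the line through `a` and `b` (when `a.1 < b.1`). -/
def cross (a b c : ℝ × ℝ) : ℝ :=
  (b.1 - a.1) * (c.2 - a.2) - (b.2 - a.2) * (c.1 - a.1)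

/-- `v` is a vertex of the upper convex hull of `T`: it is a point of `T` that is not
strictly below any segment joining two other points of `T`. -/
def UpperVertex (T : Finset (ℝ × ℝ)) (v : ℝ × ℝ) : Prop :=
  v ∈ T ∧ ∀ a ∈ T, ∀ b ∈ T, a.1 < v.1 → v.1 < b.1 → 0 ≤ cross a b v

/-- General position: distinct x-coordinates and no three collinear. -/
def GenPos (T : Finset (ℝ × ℝ)) : Prop :=
  (∀ p ∈ T, ∀ q ∈ T, p ≠ q → p.1 ≠ q.1) ∧
  (∀ p ∈ T, ∀ q ∈ T, ∀ r ∈ T, p ≠ q → q ≠ r → p ≠ r → cross p q r ≠ 0)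

/-- Every point of `S1` is strictly to the left of every point of `S2`. -/
def XSep (S1 S2 : Finset (ℝ × ℝ)) : Prop :=
  ∀ p ∈ S1, ∀ q ∈ S2, p.1 < q.1

/-- `(t1, t2)` is an upper common tangent of the x-separated sets `S1`, `S2`:
all points of `S1 ∪ S2` lie on or below the line through `t1` and `t2`. -/
def UCT (S1 S2 : Finset (ℝ × ℝ)) (t1 t2 : ℝ × ℝ) : Prop :=
  t1 ∈ S1 ∧ t2 ∈ S2 ∧ ∀ x ∈ S1 ∪ S2, cross t1 t2 x ≤ 0

/-- height at x = c of the line through p and q -/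
noncomputable def ht (c : ℝ) (p q : ℝ × ℝ) : ℝ :=
  ((q.1 - c) * p.2 + (c - p.1) * q.2) / (q.1 - p.1)

lemma keyA (c : ℝ) (p q x : ℝ × ℝ) (hpq : p.1 < q.1) (hxq : x.1 < q.1)
    (hcq : c < q.1) (h : 0 < cross p q x) : ht c p q < ht c x q := by
  unfold ht
  rw [div_lt_div_iff₀ (by linarith) (by linarith)]
  simp only [cross] at h
  nlinarith [mul_pos (show (0:ℝ) < q.1 - c by linarith) h]

lemma keyB (c : ℝ) (p q x : ℝ × ℝ) (hpq : p.1 < q.1) (hpx : p.1 < x.1)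
    (hpc : p.1 < c) (h : 0 < cross p q x) : ht c p q < ht c p x := by
  unfold ht
  rw [div_lt_div_iff₀ (by linarith) (by linarith)]
  simp only [cross] at h
  nlinarith [mul_pos (show (0:ℝ) < c - p.1 by linarith) h]

lemma keyC (c : ℝ) (t1 t2 p q : ℝ × ℝ) (ht12 : t1.1 < t2.1)
    (hpc : p.1 < c) (hcq : c < q.1)
    (hp : cross t1 t2 p ≤ 0) (hq : cross t1 t2 q ≤ 0) : ht c p q ≤ ht c t1 t2 := by
  unfold ht
  rw [div_le_div_iff₀ (by linarith) (by linarith)]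
  simp only [cross] at hp hq
  nlinarith [mul_nonneg (show (0:ℝ) ≤ q.1 - c by linarith) (neg_nonneg.2 hp),
    mul_nonneg (show (0:ℝ) ≤ c - p.1 by linarith) (neg_nonneg.2 hq)]

lemma keyCp (c : ℝ) (t1 t2 p q : ℝ × ℝ) (ht12 : t1.1 < t2.1)
    (hpc : p.1 < c) (hcq : c < q.1)
    (hp : cross t1 t2 p < 0) (hq : cross t1 t2 q ≤ 0) : ht c p q < ht c t1 t2 := by
  unfold ht
  rw [div_lt_div_iff₀ (by linarith) (by linarith)]
  simp only [cross] at hp hq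
  nlinarith [mul_pos (show (0:ℝ) < q.1 - c by linarith) (neg_pos.2 hp),
    mul_nonneg (show (0:ℝ) ≤ c - p.1 by linarith) (neg_nonneg.2 hq)]

lemma keyCq (c : ℝ) (t1 t2 p q : ℝ × ℝ) (ht12 : t1.1 < t2.1)
    (hpc : p.1 < c) (hcq : c < q.1)
    (hp : cross t1 t2 p ≤ 0) (hq : cross t1 t2 q < 0) : ht c p q < ht c t1 t2 := by
  unfold ht
  rw [div_lt_div_iff₀ (by linarith) (by linarith)]
  simp only [cross] at hp hq
  nlinarith [mul_nonneg (show (0:ℝ) ≤ q.1 - c by linarith) (neg_nonneg.2 hp),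
    mul_pos (show (0:ℝ) < c - p.1 by linarith) (neg_pos.2 hq)]

theorem stmt4 (S1 S2 : Finset (ℝ × ℝ)) (h1 : S1.Nonempty) (h2 : S2.Nonempty)
    (hgp : GenPos (S1 ∪ S2)) (hsep : XSep S1 S2) :
    ∃! t : (ℝ × ℝ) × (ℝ × ℝ), UCT S1 S2 t.1 t.2 := by
  obtain ⟨a, ha, hamax⟩ := S1.exists_max_image Prod.fst h1
  obtain ⟨b, hb, hbmin⟩ := S2.exists_min_image Prod.fst h2
  have hab : a.1 < b.1 := hsep a ha b hb
  set c : ℝ := (a.1 + b.1) / 2 with hcdef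
  have hS1c : ∀ p ∈ S1, p.1 < c := fun p hp => by
    have := hamax p hp; simp only [hcdef]; linarith
  have hS2c : ∀ q ∈ S2, c < q.1 := fun q hq => by
    have := hbmin q hq; simp only [hcdef]; linarith
  obtain ⟨t, htmem, htmax⟩ := (S1 ×ˢ S2).exists_max_image (fun z => ht c z.1 z.2)
    (h1.product h2)
  rw [Finset.mem_product] at htmem
  obtain ⟨ht1, ht2⟩ := htmem
  have ht12 : t.1.1 < t.2.1 := hsep _ ht1 _ ht2
  have hUCT : UCT S1 S2 t.1 t.2 := by
    refine ⟨ht1, ht2, ?_⟩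
    intro x hx
    by_contra hcx
    push_neg at hcx
    rcases Finset.mem_union.1 hx with hx1 | hx2
    · have hlt := keyA c t.1 t.2 x ht12 (hsep _ hx1 _ ht2) (hS2c _ ht2) hcx
      have := htmax (x, t.2) (Finset.mem_product.2 ⟨hx1, ht2⟩)
      simp only at this
      linarith
    · have hlt := keyB c t.1 t.2 x ht12 (hsep _ ht1 _ hx2) (hS1c _ ht1) hcx
      have := htmax (t.1, x) (Finset.mem_product.2 ⟨ht1, hx2⟩)
      simp only at this
      linarith
  refine ⟨t, hUCT, ?_⟩
  rintro s ⟨hs1, hs2, hsle⟩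
  obtain ⟨_, _, htle⟩ := hUCT
  have hs12 : s.1.1 < s.2.1 := hsep _ hs1 _ hs2
  -- s maximizes ht too:
  have hge : ht c t.1 t.2 ≤ ht c s.1 s.2 :=
    keyC c s.1 s.2 t.1 t.2 hs12 (hS1c _ ht1) (hS2c _ ht2)
      (hsle t.1 (Finset.mem_union_left _ ht1)) (hsle t.2 (Finset.mem_union_right _ ht2))
  have m1 : s.1 ∈ S1 ∪ S2 := Finset.mem_union_left _ hs1
  have m2 : s.2 ∈ S1 ∪ S2 := Finset.mem_union_right _ hs2
  have mt1 : t.1 ∈ S1 ∪ S2 := Finset.mem_union_left _ ht1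
  have mt2 : t.2 ∈ S1 ∪ S2 := Finset.mem_union_right _ ht2
  have hnet : t.1 ≠ t.2 := fun h => (hsep _ ht1 _ ht2).ne (congrArg Prod.fst h)
  have e1 : s.1 = t.1 := by
    by_contra hne
    have hne2 : t.2 ≠ s.1 := fun h => (hsep _ hs1 _ ht2).ne (congrArg Prod.fst h).symm
    have hc0 : cross t.1 t.2 s.1 ≠ 0 := hgp.2 t.1 mt1 t.2 mt2 s.1 m1 hnet hne2 (Ne.symm hne)
    have hlt : cross t.1 t.2 s.1 < 0 := lt_of_le_of_ne (htle s.1 m1) hc0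
    have := keyCp c t.1 t.2 s.1 s.2 ht12 (hS1c _ hs1) (hS2c _ hs2) hlt
      (htle s.2 m2)
    linarith
  have e2 : s.2 = t.2 := by
    by_contra hne
    have hne2 : t.2 ≠ s.2 := Ne.symm hne
    have hne1 : t.1 ≠ s.2 := fun h => (hsep _ ht1 _ hs2).ne (congrArg Prod.fst h)
    have hc0 : cross t.1 t.2 s.2 ≠ 0 := hgp.2 t.1 mt1 t.2 mt2 s.2 m2 hnet hne2 hne1
    have hlt : cross t.1 t.2 s.2 < 0 := lt_of_le_of_ne (htle s.2 m2) hc0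
    have := keyCq c t.1 t.2 s.1 s.2 ht12 (hS1c _ hs1) (hS2c _ hs2)
      (htle s.1 m1) hlt
    linarith
  exact Prod.ext e1 e2
end

section
/- Let S1 and S2 be finite planar point sets separated by a vertical line with upper common tangent (t1, t2). Suppose a new point q strictly to the right of all points of S2 is inserted. If the line through t1 and t2 has q strictly below it, then (t1, t2) remains the upper common tangent of S1 and S2 ∪ {q}; otherwise the new upper common tangent is (t1', q) for some t1' ∈ S1 with x-coordinate at most that of t1. -/
open Finset

lemma cross_eq' (p q x : ℝ × ℝ) :
    cross p q x = (q.1 - x.1) * (q.2 - p.2) - (q.1 - p.1) * (q.2 - x.2) := by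
  unfold cross; ring

lemma cross_nonpos_iff' {p q x : ℝ × ℝ} (hp : 0 < q.1 - p.1) (hx : 0 < q.1 - x.1) :
    cross p q x ≤ 0 ↔ (q.2 - p.2) / (q.1 - p.1) ≤ (q.2 - x.2) / (q.1 - x.1) := by
  rw [div_le_div_iff₀ hp hx, cross_eq']
  constructor <;> intro h <;> nlinarith

lemma cross_neg_iff' {p q x : ℝ × ℝ} (hp : 0 < q.1 - p.1) (hx : 0 < q.1 - x.1) :
    cross p q x < 0 ↔ (q.2 - p.2) / (q.1 - p.1) < (q.2 - x.2) / (q.1 - x.1) := by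
  rw [div_lt_div_iff₀ hp hx, cross_eq']
  constructor <;> intro h <;> nlinarith

lemma cross_identity' (t1 t2 q x : ℝ × ℝ) :
    (t2.1 - t1.1) * cross t1 q x =
      (q.1 - t1.1) * cross t1 t2 x - (x.1 - t1.1) * cross t1 t2 q := by
  unfold cross; ring

theorem stmt5 (S1 S2 : Finset (ℝ × ℝ)) (hgp : GenPos (S1 ∪ S2)) (hsep : XSep S1 S2)
    (t1 t2 : ℝ × ℝ) (ht : UCT S1 S2 t1 t2)
    (q : ℝ × ℝ) (hq : ∀ x ∈ S2, x.1 < q.1) :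
    (cross t1 t2 q < 0 → UCT S1 (insert q S2) t1 t2) ∧
    (¬ cross t1 t2 q < 0 → ∃ t1' ∈ S1, t1'.1 ≤ t1.1 ∧ UCT S1 (insert q S2) t1' q) := by
  obtain ⟨ht1, ht2, hall⟩ := ht
  have h12 : t1.1 < t2.1 := hsep t1 ht1 t2 ht2
  have h2q : t2.1 < q.1 := hq t2 ht2
  have hS1q : ∀ x ∈ S1, x.1 < q.1 := fun x hx => lt_trans (hsep x hx t2 ht2) h2q
  constructor
  · intro hneg
    refine ⟨ht1, mem_insert_of_mem ht2, fun x hx => ?_⟩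
    rcases mem_union.mp hx with h1 | h2
    · exact hall x (mem_union_left _ h1)
    · rcases mem_insert.mp h2 with rfl | h2
      · exact le_of_lt hneg
      · exact hall x (mem_union_right _ h2)
  · intro hpos
    rw [not_lt] at hpos
    set s : ℝ × ℝ → ℝ := fun p => (q.2 - p.2) / (q.1 - p.1) with hs
    obtain ⟨t1', ht1', hmin⟩ := S1.exists_min_image s ⟨t1, ht1⟩
    have ht1'q : 0 < q.1 - t1'.1 := by linarith [hS1q t1' ht1']
    have ht1q : 0 < q.1 - t1.1 := by linarith [hS1q t1 ht1]
    -- key: for x in S2, cross t1 q x ≤ 0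
    have hkey : ∀ x ∈ S2, cross t1 q x ≤ 0 := by
      intro x hx
      have hx1 : t1.1 < x.1 := hsep t1 ht1 x hx
      have h1 := hall x (mem_union_right _ hx)
      have hid := cross_identity' t1 t2 q x
      nlinarith
    -- t1'.1 ≤ t1.1
    have hle : t1'.1 ≤ t1.1 := by
      by_contra h
      push_neg at h
      have hne1 : t1' ≠ t1 := fun he => by rw [he] at h; exact lt_irrefl _ h
      have hne2 : t1 ≠ t2 := fun he => by rw [he] at h12; exact lt_irrefl _ h12
      have h1'2 : t1'.1 < t2.1 := hsep t1' ht1' t2 ht2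
      have hne3 : t2 ≠ t1' := fun he => by rw [he] at h1'2; exact lt_irrefl _ h1'2
      have hc : cross t1 t2 t1' ≠ 0 :=
        hgp.2 t1 (mem_union_left _ ht1) t2 (mem_union_right _ ht2)
          t1' (mem_union_left _ ht1') hne2 hne3 (Ne.symm hne1)
      have hc2 : cross t1 t2 t1' < 0 :=
        lt_of_le_of_ne (hall t1' (mem_union_left _ ht1')) hc
      have hid := cross_identity' t1 t2 q t1'
      have hneg : cross t1 q t1' < 0 := by nlinarith
      have := (cross_neg_iff' ht1q ht1'q).mp hneg
      have := hmin t1 ht1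
      simp only [hs] at this
      linarith
    refine ⟨t1', ht1', hle, ht1', mem_insert_self _ _, fun x hx => ?_⟩
    rcases mem_union.mp hx with h1 | h2
    · -- x ∈ S1
      have hxq : 0 < q.1 - x.1 := by linarith [hS1q x h1]
      exact (cross_nonpos_iff' ht1'q hxq).mpr (hmin x h1)
    · rcases mem_insert.mp h2 with rfl | h2
      · have : cross t1' x x = 0 := by unfold cross; ring
        exact le_of_eq this
      · -- x ∈ S2
        have hxq : 0 < q.1 - x.1 := by linarith [hq x h2]
        have h1 := (cross_nonpos_iff' ht1q hxq).mp (hkey x h2)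
        have h2' := hmin t1 ht1
        simp only [hs] at h2'
        exact (cross_nonpos_iff' ht1'q hxq).mpr (by linarith)
end

section
/- Let S1, S2 be finite planar point sets separated by a vertical line with upper common tangent (t1, t2). After deleting t1 from S1 (with S1 \ {t1} nonempty), the new upper common tangent (t1', t2') satisfies: the x-coordinate of t2' is at most the x-coordinate of t2 (the right tangent point moves weakly leftward). -/
open Finset

theorem stmt6 (S1 S2 : Finset (ℝ × ℝ)) (hgp : GenPos (S1 ∪ S2)) (hsep : XSep S1 S2)
    (t1 t2 : ℝ × ℝ) (ht : UCT S1 S2 t1 t2)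
    (hne : (S1.erase t1).Nonempty)
    (t1' t2' : ℝ × ℝ) (ht' : UCT (S1.erase t1) S2 t1' t2') :
    t2'.1 ≤ t2.1 := by
  by_contra hlt
  push_neg at hlt
  obtain ⟨ht1, ht2, hall⟩ := ht
  obtain ⟨ht1', ht2', hall'⟩ := ht'
  have ht1'S1 : t1' ∈ S1 := Finset.mem_of_mem_erase ht1'
  -- memberships in the union
  have m1 : t1' ∈ S1 ∪ S2 := Finset.mem_union_left _ ht1'S1
  have m2 : t2' ∈ S1 ∪ S2 := Finset.mem_union_right _ ht2'
  have m3 : t2 ∈ S1 ∪ S2 := Finset.mem_union_right _ ht2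
  -- key inequalities
  have hA : cross t1 t2 t1' ≤ 0 := hall _ m1
  have hB : cross t1 t2 t2' ≤ 0 := hall _ m2
  have hC : cross t1' t2' t2 ≤ 0 :=
    hall' _ (Finset.mem_union_right _ ht2)
  have hx1 : t1'.1 < t2.1 := hsep _ ht1'S1 _ ht2
  have hx0 : t1.1 < t2.1 := hsep _ ht1 _ ht2
  -- identity: (t2'.1 - t1'.1) * f(t2) = (t2.1 - t1'.1) f(t2') + (t2'.1 - t2.1) f(t1')
  --           + (t2.1 - t1.1) * cross t1' t2' t2, with f(t2) = 0
  have hid : (t2.1 - t1'.1) * cross t1 t2 t2' + (t2'.1 - t2.1) * cross t1 t2 t1'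
      + (t2.1 - t1.1) * cross t1' t2' t2 = 0 := by
    unfold cross; ring
  have hzero : cross t1' t2' t2 = 0 := by
    nlinarith [mul_nonpos_of_nonneg_of_nonpos (le_of_lt (sub_pos.mpr hx1)) hB,
      mul_nonpos_of_nonneg_of_nonpos (le_of_lt (sub_pos.mpr hlt)) hA,
      mul_nonpos_of_nonneg_of_nonpos (le_of_lt (sub_pos.mpr hx0)) hC]
  have hne12 : t1' ≠ t2' := by
    intro h; exact absurd (h ▸ rfl) (ne_of_lt (hsep _ ht1'S1 _ ht2'))
  have hne13 : t1' ≠ t2 := by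
    intro h; exact absurd (h ▸ rfl) (ne_of_lt hx1)
  have hne23 : t2' ≠ t2 := by
    intro h; exact absurd (h ▸ rfl) (ne_of_gt hlt)
  exact hgp.2 _ m1 _ m2 _ m3 hne12 hne23 hne13 hzero
end

section
/- Let S be a finite set of planar points sorted by increasing x-coordinate and let p be a point strictly to the left of all of S. Then there exists a unique vertex v of the upper convex hull of S such that the segment pv is tangent to the upper hull of S at v, i.e., all points of S lie on or below the line through p and v; moreover v is a vertex of the upper hull of S ∪ {p}, and the vertices of the upper hull of S ∪ {p} are exactly {p} together with the vertices of the upper hull of S whose x-coordinate is at least that of v. -/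
open Finset

lemma cross_swap (p a b : ℝ × ℝ) : cross p a b = - cross p b a := by
  unfold cross; ring

lemma tangent_upper {p v a b : ℝ × ℝ} (hpa : p.1 < a.1) (hav : a.1 < v.1)
    (hvb : v.1 < b.1) (hA : cross p v a ≤ 0) (hB : cross p v b ≤ 0) :
    0 ≤ cross a b v := by
  have key : (v.1 - p.1) * cross a b v
      = -(b.1 - v.1) * cross p v a - (v.1 - a.1) * cross p v b := by
    unfold cross; ring
  by_contra h
  push_neg at h
  nlinarith [mul_nonneg (by linarith : (0:ℝ) ≤ b.1 - v.1) (by linarith : (0:ℝ) ≤ -cross p v a),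
    mul_nonneg (by linarith : (0:ℝ) ≤ v.1 - a.1) (by linarith : (0:ℝ) ≤ -cross p v b),
    mul_pos (by linarith : (0:ℝ) < v.1 - p.1) (by linarith : (0:ℝ) < -cross a b v)]

lemma chain_upper {p v w b : ℝ × ℝ} (hpv : p.1 < v.1) (hvw : v.1 < w.1)
    (hwb : w.1 < b.1) (hV : 0 ≤ cross p b v) (hW : 0 ≤ cross v b w) :
    0 ≤ cross p b w := by
  have key : (b.1 - v.1) * cross p b w
      = (b.1 - w.1) * cross p b v + (b.1 - p.1) * cross v b w := by
    unfold cross; ring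
  by_contra h
  push_neg at h
  nlinarith [mul_nonneg (by linarith : (0:ℝ) ≤ b.1 - w.1) hV,
    mul_nonneg (by linarith : (0:ℝ) ≤ b.1 - p.1) hW,
    mul_pos (by linarith : (0:ℝ) < b.1 - v.1) (by linarith : (0:ℝ) < -cross p b w)]

theorem stmt7 (S : Finset (ℝ × ℝ)) (hS : S.Nonempty) (p : ℝ × ℝ)
    (hgp : GenPos (insert p S)) (hleft : ∀ x ∈ S, p.1 < x.1) :
    ∃ v, (UpperVertex S v ∧ ∀ x ∈ S, cross p v x ≤ 0) ∧
      (∀ v', UpperVertex S v' ∧ (∀ x ∈ S, cross p v' x ≤ 0) → v' = v) ∧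
      UpperVertex (insert p S) v ∧
      (∀ w, UpperVertex (insert p S) w ↔ (w = p ∨ (UpperVertex S w ∧ v.1 ≤ w.1))) := by
  obtain ⟨v, hvS, hv⟩ := S.exists_max_image (fun x => (x.2 - p.2) / (x.1 - p.1)) hS
  have hpv : p.1 < v.1 := hleft v hvS
  -- tangency
  have htan : ∀ x ∈ S, cross p v x ≤ 0 := by
    intro x hx
    have h := hv x hx
    have hpx : p.1 < x.1 := hleft x hx
    rw [div_le_div_iff₀ (by linarith) (by linarith)] at h
    unfold cross
    nlinarith [h]
  have hpne : ∀ x ∈ S, p ≠ x := fun x hx he => absurd (hleft x hx) (by rw [he]; exact lt_irrefl _)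
  -- v is an upper vertex of S
  have hup : UpperVertex S v :=
    ⟨hvS, fun a ha b hb hav hvb =>
      tangent_upper (hleft a ha) hav hvb (htan a ha) (htan b hb)⟩
  -- uniqueness helper: if cross p v x = 0 for x ∈ S then x = v
  have hcol : ∀ x ∈ S, cross p v x = 0 → x = v := by
    intro x hx h0
    by_contra hne
    exact hgp.2 p (mem_insert_self _ _) v (mem_insert_of_mem hvS) x (mem_insert_of_mem hx)
      (hpne v hvS) (fun he => hne he.symm) (hpne x hx) h0
  refine ⟨v, ⟨hup, htan⟩, ?_, ?_, ?_⟩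
  · rintro v' ⟨hv'1, hv'2⟩
    have h1 : cross p v v' ≤ 0 := htan v' hv'1.1
    have h2 : cross p v' v ≤ 0 := hv'2 v hvS
    have h0 : cross p v v' = 0 := by rw [cross_swap] at h2; linarith
    exact hcol v' hv'1.1 h0
  · refine ⟨mem_insert_of_mem hvS, ?_⟩
    intro a ha b hb hav hvb
    have hbS : b ∈ S := by
      rcases mem_insert.mp hb with h | h
      · exact absurd hvb (by rw [h]; linarith)
      · exact h
    rcases mem_insert.mp ha with h | h
    · subst h
      rw [show cross a b v = - cross a v b from cross_swap a b v]
      linarith [htan b hbS]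
    · exact hup.2 a h b hbS hav hvb
  · intro w
    constructor
    · rintro ⟨hwmem, hw⟩
      rcases mem_insert.mp hwmem with h | hwS
      · exact Or.inl h
      have hne : w ≠ p := fun he => hpne w hwS he.symm
      refine Or.inr ⟨⟨hwS, fun a ha b hb => hw a (mem_insert_of_mem ha) b (mem_insert_of_mem hb)⟩, ?_⟩
      by_contra hlt
      push_neg at hlt
      have hpw : p.1 < w.1 := hleft w hwS
      have h1 : 0 ≤ cross p v w :=
        hw p (mem_insert_self _ _) v (mem_insert_of_mem hvS) hpw hlt
      have h2 : cross p v w ≤ 0 := htan w hwS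
      have h0 : cross p v w = 0 := le_antisymm h2 h1
      have := hcol w hwS h0
      rw [this] at hlt
      exact lt_irrefl _ hlt
    · rintro (rfl | ⟨⟨hwS, hw⟩, hvw⟩)
      · refine ⟨mem_insert_self _ _, ?_⟩
        intro a ha b hb hap hpb
        exfalso
        rcases mem_insert.mp ha with h | h
        · rw [h] at hap; exact lt_irrefl _ hap
        · exact absurd (hleft a h) (by linarith)
      · refine ⟨mem_insert_of_mem hwS, ?_⟩
        intro a ha b hb haw hwb
        have hpw : p.1 < w.1 := hleft w hwS
        have hbS : b ∈ S := by
          rcases mem_insert.mp hb with h | h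
          · exact absurd hwb (by rw [h]; linarith)
          · exact h
        rcases mem_insert.mp ha with h | haS
        · subst h
          have hVb : 0 ≤ cross a b v := by
            rw [show cross a b v = - cross a v b from cross_swap a b v]
            linarith [htan b hbS]
          rcases eq_or_ne v w with rfl | hne
          · exact hVb
          · have hvltw : v.1 < w.1 := by
              rcases lt_or_eq_of_le hvw with h | h
              · exact h
              · exact absurd (hgp.1 v (mem_insert_of_mem hvS) w (mem_insert_of_mem hwS) hne h) (fun _ => by exact absurd h (hgp.1 v (mem_insert_of_mem hvS) w (mem_insert_of_mem hwS) hne))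
            exact chain_upper hpv hvltw hwb hVb (hw v hvS b hbS hvltw hwb)
        · exact hw a haS b hbS haw hwb
end

section
/- Let S1 and S2 be finite nonempty planar point sets separated by a vertical line, with upper common tangent (t1, t2). Then the vertex sequence of the upper hull of S1 ∪ S2 equals the vertices of the upper hull of S1 with x-coordinate at most that of t1, followed by the vertices of the upper hull of S2 with x-coordinate at least that of t2. -/
open Finset

/-- A point `m` on the line `t1 t2`, with `a` and `b` on or below that line and
`a.1 ≤ m.1 ≤ b.1`, lies on or above the chord `a b`. -/
lemma above_chord {t1 t2 a b m : ℝ × ℝ}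
    (ha : cross t1 t2 a ≤ 0) (hb : cross t1 t2 b ≤ 0) (hm : cross t1 t2 m = 0)
    (ht : t1.1 < t2.1) (h1 : a.1 ≤ m.1) (h2 : m.1 ≤ b.1) :
    0 ≤ cross a b m := by
  have key : cross a b m * (t2.1 - t1.1) =
      -((b.1 - m.1) * cross t1 t2 a) - ((m.1 - a.1) * cross t1 t2 b)
        + (b.1 - a.1) * cross t1 t2 m := by
    simp only [cross]; ring
  nlinarith [mul_nonneg (sub_nonneg.2 h2) (neg_nonneg.2 ha),
    mul_nonneg (sub_nonneg.2 h1) (neg_nonneg.2 hb)]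

lemma chain_left {a b t1 w : ℝ × ℝ}
    (h1 : 0 ≤ cross a t1 w) (h2 : 0 ≤ cross a b t1)
    (haw : a.1 < w.1) (hat : a.1 < t1.1) (hab : a.1 < b.1) :
    0 ≤ cross a b w := by
  have key : cross a b w * (t1.1 - a.1) =
      (b.1 - a.1) * cross a t1 w + (w.1 - a.1) * cross a b t1 := by
    simp only [cross]; ring
  nlinarith [mul_nonneg (le_of_lt (sub_pos.2 hab)) h1,
    mul_nonneg (le_of_lt (sub_pos.2 haw)) h2]

lemma chain_right {a b t2 w : ℝ × ℝ}
    (h1 : 0 ≤ cross t2 b w) (h2 : 0 ≤ cross a b t2)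
    (hwb : w.1 < b.1) (htb : t2.1 < b.1) (hab : a.1 < b.1) :
    0 ≤ cross a b w := by
  have key : cross a b w * (b.1 - t2.1) =
      (b.1 - a.1) * cross t2 b w + (b.1 - w.1) * cross a b t2 := by
    simp only [cross]; ring
  nlinarith [mul_nonneg (le_of_lt (sub_pos.2 hab)) h1,
    mul_nonneg (le_of_lt (sub_pos.2 hwb)) h2]

theorem stmt14 (S1 S2 : Finset (ℝ × ℝ)) (h1 : S1.Nonempty) (h2 : S2.Nonempty)
    (hgp : GenPos (S1 ∪ S2)) (hsep : XSep S1 S2)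
    (t1 t2 : ℝ × ℝ) (ht : UCT S1 S2 t1 t2) :
    ∀ w, UpperVertex (S1 ∪ S2) w ↔
      ((UpperVertex S1 w ∧ w.1 ≤ t1.1) ∨ (UpperVertex S2 w ∧ t2.1 ≤ w.1)) := by
  obtain ⟨ht1, ht2, htan⟩ := ht
  have ht1u : t1 ∈ S1 ∪ S2 := mem_union_left _ ht1
  have ht2u : t2 ∈ S1 ∪ S2 := mem_union_right _ ht2
  have ht12 : t1.1 < t2.1 := hsep t1 ht1 t2 ht2
  intro w
  constructor
  · rintro ⟨hwmem, hconv⟩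
    rcases mem_union.1 hwmem with hw1 | hw2
    · left
      refine ⟨⟨hw1, fun a ha b hb hav hvb =>
        hconv a (mem_union_left _ ha) b (mem_union_left _ hb) hav hvb⟩, ?_⟩
      by_contra hle
      push_neg at hle
      have hwt2 : w.1 < t2.1 := hsep w hw1 t2 ht2
      have hge : 0 ≤ cross t1 t2 w := hconv t1 ht1u t2 ht2u hle hwt2
      have hle' : cross t1 t2 w ≤ 0 := htan w hwmem
      have : cross t1 t2 w = 0 := le_antisymm hle' hge
      exact hgp.2 t1 ht1u t2 ht2u w hwmem
        (fun h => absurd (congrArg Prod.fst h) (ne_of_lt ht12))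
        (fun h => absurd (congrArg Prod.fst h) (ne_of_gt hwt2))
        (fun h => absurd (congrArg Prod.fst h) (ne_of_lt hle)) this
    · right
      refine ⟨⟨hw2, fun a ha b hb hav hvb =>
        hconv a (mem_union_right _ ha) b (mem_union_right _ hb) hav hvb⟩, ?_⟩
      by_contra hle
      push_neg at hle
      have ht1w : t1.1 < w.1 := hsep t1 ht1 w hw2
      have hge : 0 ≤ cross t1 t2 w := hconv t1 ht1u t2 ht2u ht1w hle
      have hle' : cross t1 t2 w ≤ 0 := htan w hwmem
      have : cross t1 t2 w = 0 := le_antisymm hle' hge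
      exact hgp.2 t1 ht1u t2 ht2u w hwmem
        (fun h => absurd (congrArg Prod.fst h) (ne_of_lt ht12))
        (fun h => absurd (congrArg Prod.fst h) (ne_of_gt hle))
        (fun h => absurd (congrArg Prod.fst h) (ne_of_lt ht1w)) this
  · rintro (⟨⟨hw1, hconv⟩, hwt⟩ | ⟨⟨hw2, hconv⟩, hwt⟩)
    · refine ⟨mem_union_left _ hw1, fun a ha b hb hav hvb => ?_⟩
      have ha1 : a ∈ S1 := by
        rcases mem_union.1 ha with h | h
        · exact h
        · exact absurd (hsep t1 ht1 a h) (by linarith)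
      rcases mem_union.1 hb with hb1 | hb2
      · exact hconv a ha1 b hb1 hav hvb
      · -- b ∈ S2
        have hbt2 : cross t1 t2 b ≤ 0 := htan b hb
        have hat : cross t1 t2 a ≤ 0 := htan a (mem_union_left _ ha1)
        have hat1 : a.1 < t1.1 := lt_of_lt_of_le hav hwt
        have ht1b : t1.1 < b.1 := hsep t1 ht1 b hb2
        have habt1 : 0 ≤ cross a b t1 :=
          above_chord hat hbt2 (by simp [cross]) ht12 (le_of_lt hat1) (le_of_lt ht1b)
        rcases eq_or_lt_of_le hwt with heq | hlt
        · -- w.1 = t1.1, so w = t1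
          have hwt1 : w = t1 := by
            by_contra hne
            exact hgp.1 w (mem_union_left _ hw1) t1 ht1u hne heq
          rw [hwt1]; exact habt1
        · have h1' : 0 ≤ cross a t1 w := hconv a ha1 t1 ht1 hav hlt
          exact chain_left h1' habt1 hav hat1 (lt_trans hav hvb)
    · refine ⟨mem_union_right _ hw2, fun a ha b hb hav hvb => ?_⟩
      have hb2 : b ∈ S2 := by
        rcases mem_union.1 hb with h | h
        · exact absurd (hsep b h t2 ht2) (by linarith)
        · exact h
      rcases mem_union.1 ha with ha1 | ha2
      · -- a ∈ S1
        have hbt2 : cross t1 t2 b ≤ 0 := htan b (mem_union_right _ hb2)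
        have hat : cross t1 t2 a ≤ 0 := htan a ha
        have hat2 : a.1 < t2.1 := hsep a ha1 t2 ht2
        have ht2b : t2.1 < b.1 := lt_of_le_of_lt hwt hvb
        have habt2 : 0 ≤ cross a b t2 :=
          above_chord hat hbt2 (by simp only [cross]; ring) ht12 (le_of_lt hat2) (le_of_lt ht2b)
        rcases eq_or_lt_of_le hwt with heq | hlt
        · have hwt2 : w = t2 := by
            by_contra hne
            exact hgp.1 t2 ht2u w (mem_union_right _ hw2) (Ne.symm hne) heq
          rw [hwt2]; exact habt2
        · have h1' : 0 ≤ cross t2 b w := hconv t2 ht2 b hb2 hlt hvb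
          exact chain_right h1' habt2 hvb ht2b (lt_trans hav hvb)
      · exact hconv a ha2 b hb2 hav hvb
end

section
/- Correctness of the alternating tangent-search: let S1, S2 be finite x-separated planar point sets with upper hull vertex sequences, and let p ∈ S1, q ∈ S2 be upper hull vertices such that all upper hull vertices of S1 strictly to the right of p lie strictly below the line pq and all upper hull vertices of S2 strictly to the right of q lie strictly below the line pq. If additionally the left neighbor of p on the upper hull of S1 (if it exists) lies strictly below line pq and the left neighbor of q on the upper hull of S2 (if it exists) lies strictly below line pq, then (p, q) is the upper common tangent of S1 and S2. -/
open Finset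

/-- Key affine identity: the height of `c` above line `pq` interpolates between
those of `a` and `b`, corrected by the orientation of `a b c`. -/
lemma cross_key (p q a b c : ℝ × ℝ) :
    (b.1 - a.1) * cross p q c =
      (b.1 - c.1) * cross p q a + (c.1 - a.1) * cross p q b +
        (q.1 - p.1) * cross a b c := by
  simp only [cross]; ring

lemma cross_self_right (p q : ℝ × ℝ) : cross p q p = 0 := by
  simp only [cross]; ring

lemma cross_self_mid (p q : ℝ × ℝ) : cross p q q = 0 := by
  simp only [cross]; ring

theorem stmt16 (S1 S2 : Finset (ℝ × ℝ)) (hgp : GenPos (S1 ∪ S2)) (hsep : XSep S1 S2)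
    (p q : ℝ × ℝ) (hpv : UpperVertex S1 p) (hqv : UpperVertex S2 q)
    (hr1 : ∀ w, UpperVertex S1 w → p.1 < w.1 → cross p q w < 0)
    (hr2 : ∀ w, UpperVertex S2 w → q.1 < w.1 → cross p q w < 0)
    (hl1 : ∀ w, UpperVertex S1 w → w.1 < p.1 →
      (∀ u, UpperVertex S1 u → u.1 < p.1 → u.1 ≤ w.1) → cross p q w < 0)
    (hl2 : ∀ w, UpperVertex S2 w → w.1 < q.1 →
      (∀ u, UpperVertex S2 u → u.1 < q.1 → u.1 ≤ w.1) → cross p q w < 0) :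
    UCT S1 S2 p q := by
  classical
  obtain ⟨hp, -⟩ := hpv
  obtain ⟨hq, -⟩ := hqv
  have hpq : p.1 < q.1 := hsep p hp q hq
  have hα : (0:ℝ) < q.1 - p.1 := by linarith
  -- it suffices to bound upper vertices
  have key : ∀ T : Finset (ℝ × ℝ), (∀ w, UpperVertex T w → cross p q w ≤ 0) →
      ∀ x ∈ T, cross p q x ≤ 0 := by
    intro T hT x hx
    obtain ⟨m, hm, hmax⟩ := T.exists_max_image (fun y => cross p q y) ⟨x, hx⟩
    have hmv : UpperVertex T m := by
      refine ⟨hm, fun a ha b hb hax hbx => ?_⟩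
      have h1 := hmax a ha
      have h2 := hmax b hb
      have hid := cross_key p q a b m
      by_contra hc
      push_neg at hc
      nlinarith [mul_nonneg (le_of_lt (sub_pos.2 hbx)) (sub_nonneg.2 h1),
        mul_nonneg (le_of_lt (sub_pos.2 hax)) (sub_nonneg.2 h2),
        mul_pos hα (neg_pos.2 hc)]
    calc cross p q x ≤ cross p q m := hmax x hx
      _ ≤ 0 := hT m hmv
  -- bound the upper vertices of S1
  have hV1 : ∀ w, UpperVertex S1 w → cross p q w ≤ 0 := by
    intro w hw
    rcases lt_trichotomy w.1 p.1 with h | h | h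
    · by_contra hc
      push_neg at hc
      set V := S1.filter (fun u => UpperVertex S1 u ∧ u.1 < p.1) with hV
      have hwV : w ∈ V := mem_filter.2 ⟨hw.1, hw, h⟩
      obtain ⟨l, hlV, hlmax⟩ := V.exists_max_image (fun u => u.1) ⟨w, hwV⟩
      obtain ⟨hlS, hlv, hlx⟩ := mem_filter.1 hlV
      have hlneg : cross p q l < 0 :=
        hl1 l hlv hlx (fun u hu hux => hlmax u (mem_filter.2 ⟨hu.1, hu, hux⟩))
      have hwle : w.1 ≤ l.1 := hlmax w hwV
      have hwne : w ≠ l := by rintro rfl; linarith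
      have hwlt : w.1 < l.1 :=
        lt_of_le_of_ne hwle
          (hgp.1 w (mem_union_left _ hw.1) l (mem_union_left _ hlS) hwne)
      have hcr : 0 ≤ cross w p l := hlv.2 w hw.1 p hp hwlt hlx
      have hid := cross_key p q w p l
      rw [cross_self_right] at hid
      nlinarith [mul_pos (sub_pos.2 h) hc, mul_nonneg (le_of_lt hα) hcr,
        mul_pos (sub_pos.2 (lt_trans hwlt hlx)) (neg_pos.2 hlneg)]
    · have hwp : w = p := by
        by_contra hne
        exact hgp.1 w (mem_union_left _ hw.1) p (mem_union_left _ hp) hne h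
      rw [hwp, cross_self_right]
    · exact le_of_lt (hr1 w hw h)
  -- bound the upper vertices of S2
  have hV2 : ∀ w, UpperVertex S2 w → cross p q w ≤ 0 := by
    intro w hw
    rcases lt_trichotomy w.1 q.1 with h | h | h
    · by_contra hc
      push_neg at hc
      set V := S2.filter (fun u => UpperVertex S2 u ∧ u.1 < q.1) with hV
      have hwV : w ∈ V := mem_filter.2 ⟨hw.1, hw, h⟩
      obtain ⟨l, hlV, hlmax⟩ := V.exists_max_image (fun u => u.1) ⟨w, hwV⟩
      obtain ⟨hlS, hlv, hlx⟩ := mem_filter.1 hlV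
      have hlneg : cross p q l < 0 :=
        hl2 l hlv hlx (fun u hu hux => hlmax u (mem_filter.2 ⟨hu.1, hu, hux⟩))
      have hwle : w.1 ≤ l.1 := hlmax w hwV
      have hwne : w ≠ l := by rintro rfl; linarith
      have hwlt : w.1 < l.1 :=
        lt_of_le_of_ne hwle
          (hgp.1 w (mem_union_right _ hw.1) l (mem_union_right _ hlS) hwne)
      have hcr : 0 ≤ cross w q l := hlv.2 w hw.1 q hq hwlt hlx
      have hid := cross_key p q w q l
      rw [cross_self_mid] at hid
      nlinarith [mul_pos (sub_pos.2 h) hc, mul_nonneg (le_of_lt hα) hcr,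
        mul_pos (sub_pos.2 (lt_trans hwlt hlx)) (neg_pos.2 hlneg)]
    · have hwq : w = q := by
        by_contra hne
        exact hgp.1 w (mem_union_right _ hw.1) q (mem_union_right _ hq) hne h
      rw [hwq, cross_self_mid]
    · exact le_of_lt (hr2 w hw h)
  refine ⟨hp, hq, fun x hx => ?_⟩
  rcases mem_union.1 hx with h | h
  · exact key S1 hV1 x h
  · exact key S2 hV2 x h
end
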